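/- Let k and ℓ be integers with 3 ≤ k ≤ ℓ and let G_{k,ℓ} be the graph described in the context. Then every total dominating set of G_{k,ℓ} that does not contain the vertex u has at least ℓ vertices. -/

import Mathlib

/-- Vertices of `G_{k,ℓ}`: triangle vertices `t_{i,j}` as `Sum.inl (i,j)`
(0-indexed, `i : Fin (k+ℓ-2)`, `j : Fin 3`), and `u = Sum.inr false`,
`v = Sum.inr true`. -/
abbrev GklV (k l : ℕ) := (Fin (k + l - 2) × Fin 3) ⊕ Bool

/-- Edge relation of `G_{k,ℓ}`: triangles on each `t_{i,·}`; `u` adjacent to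
`t_{i,1}` for `i ≤ k-1` (0-indexed `i.val < k-1`, `j = 0`) and to all `t_{i,j}`
for `i ≥ k` (0-indexed `k-1 ≤ i.val`); `v` adjacent to all `t_{i,j}` for
`i ≤ k-1` and to `t_{i,1}`, `t_{i,2}` for `i ≥ k`; `u` and `v` nonadjacent. -/
def GklRel (k l : ℕ) : GklV k l → GklV k l → Prop
  | .inl p, .inl q => p.1 = q.1
  | .inr false, .inl p => (p.1.val < k - 1 ∧ p.2.val = 0) ∨ k - 1 ≤ p.1.val
  | .inr true, .inl p =>
      p.1.val < k - 1 ∨ (k - 1 ≤ p.1.val ∧ (p.2.val = 0 ∨ p.2.val = 1))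
  | _, _ => False

/-- The graph `G_{k,ℓ}`. -/
def Gkl (k l : ℕ) : SimpleGraph (GklV k l) := SimpleGraph.fromRel (GklRel k l)

/-- `D` is a total dominating set of `G`. -/
def IsTotalDomSet {V : Type*} (G : SimpleGraph V) (D : Finset V) : Prop :=
  ∀ v : V, ∃ d ∈ D, G.Adj v d

/-!
Each triangle `t_{n,·}` with `n ≥ k` needs a dominator of `t_{n,3}` inside
its own triangle, since `v` misses `t_{n,3}` and `u ∉ D`. The vertex `t_{k-1,3}` needs a
dominator in its triangle or `v`. Collapsing `v` and all triangles `t_{i,·}` with `i ≤ k - 1`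
to one block, `D` therefore meets `ℓ` distinct blocks.
-/

/-- With 0-indexing the low triangles are those of index `≤ k - 2`, so `max` merges them with
`u` and `v` into the block `k - 2`. -/
def blockIndex (k l : ℕ) : GklV k l → ℕ
  | .inl p => max p.1.val (k - 2)
  | .inr _ => k - 2

lemma blockIndex_eq_of_adj {k l : ℕ} {n : Fin (k + l - 2)} (hn : k - 2 ≤ n.val)
    {d : GklV k l} (hd : d ≠ .inr false) (hadj : (Gkl k l).Adj (.inl (n, 2)) d) :
    blockIndex k l d = n.val := by
  rw [Gkl, SimpleGraph.fromRel_adj] at hadj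
  obtain ⟨-, hrel⟩ := hadj
  rcases d with ⟨i, j⟩ | _ | _
  · have hi : i = n := by rcases hrel with h | h; exacts [h.symm, h]
    simp [blockIndex, hi, hn]
  · exact absurd rfl hd
  · have hlow : n.val < k - 1 := by simpa [GklRel] using hrel
    simp only [blockIndex]
    omega

theorem stmt9_general (k l : ℕ) (hk : 3 ≤ k)
    (D : Finset (GklV k l)) (hD : IsTotalDomSet (Gkl k l) D)
    (hu : (Sum.inr false : GklV k l) ∉ D) :
    l ≤ D.card := by
  have hsurj : Set.SurjOn (blockIndex k l) D (Finset.Ico (k - 2) (k + l - 2)) := by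
    intro n hn
    rw [Finset.coe_Ico, Set.mem_Ico] at hn
    obtain ⟨d, hdD, hadj⟩ := hD (.inl (⟨n, hn.2⟩, 2))
    exact ⟨d, hdD, blockIndex_eq_of_adj hn.1 (ne_of_mem_of_not_mem hdD hu) hadj⟩
  calc l = (Finset.Ico (k - 2) (k + l - 2)).card := by rw [Nat.card_Ico]; omega
    _ ≤ D.card := Finset.card_le_card_of_surjOn _ hsurj

/-- Every total dominating set of `G_{k,ℓ}` not containing `u` has at least
`ℓ` vertices. -/
theorem stmt9 (k l : ℕ) (hk : 3 ≤ k) (hkl : k ≤ l)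
    (D : Finset (GklV k l)) (hD : IsTotalDomSet (Gkl k l) D)
    (hu : (Sum.inr false : GklV k l) ∉ D) :
    l ≤ D.card :=
  stmt9_general k l hk D hD hu
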